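/- arXiv:1311.4359 — 4 statements merged into one kernel-verified Lean document; each statement's English description precedes it below -/
import Mathlib

section
/- For every positive integer n, the sum over all ordered pairs (ρ₁, ρ₂) of n-th roots of unity in ℂ with ρ₁ ≠ ρ₂ of ρ₁ρ₂/((ρ₁−ρ₂)(ρ₂−ρ₁)) equals n(n²−1)/12. -/
open Polynomial Finset

private lemma roots_image (n : ℕ) (hn : 0 < n) {ζ : ℂ} (hζ : IsPrimitiveRoot ζ n) :
    nthRootsFinset n (1 : ℂ) = (Finset.range n).image (ζ ^ ·) := by
  haveI : NeZero n := ⟨hn.ne'⟩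
  ext x
  simp only [Polynomial.mem_nthRootsFinset hn, Finset.mem_image, Finset.mem_range]
  constructor
  · intro hx
    obtain ⟨i, hi, rfl⟩ := hζ.eq_pow_of_pow_eq_one hx
    exact ⟨i, hi, rfl⟩
  · rintro ⟨i, hi, rfl⟩
    rw [← pow_mul, mul_comm, pow_mul, hζ.pow_eq_one, one_pow]

private lemma powsum (n : ℕ) (hn : 0 < n) (m : ℕ) :
    ∑ t ∈ nthRootsFinset n (1 : ℂ), t ^ m = if n ∣ m then (n : ℂ) else 0 := by
  obtain ⟨ζ, hζ⟩ : ∃ ζ : ℂ, IsPrimitiveRoot ζ n := ⟨_, Complex.isPrimitiveRoot_exp n hn.ne'⟩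
  rw [roots_image n hn hζ,
    Finset.sum_image (fun i hi j hj h => hζ.pow_inj (mem_range.1 hi) (mem_range.1 hj) h)]
  have hrw : ∀ i, (ζ ^ i) ^ m = (ζ ^ m) ^ i := fun i => by
    rw [← pow_mul, mul_comm, pow_mul]
  simp_rw [hrw]
  by_cases h : n ∣ m
  · have h1 : ζ ^ m = 1 := (hζ.pow_eq_one_iff_dvd m).2 h
    simp [h1, h]
  · have h1 : ζ ^ m ≠ 1 := fun hc => h ((hζ.pow_eq_one_iff_dvd m).1 hc)
    rw [geom_sum_eq h1, if_neg h]
    have h2 : (ζ ^ m) ^ n = 1 := by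
      rw [← pow_mul, mul_comm, pow_mul, hζ.pow_eq_one, one_pow]
    rw [h2, sub_self, zero_div]

private lemma key (n : ℕ) (hn : 0 < n) {t : ℂ} (ht : t ∈ nthRootsFinset n (1 : ℂ)) (ht1 : t ≠ 1) :
    (1 - t) * ∑ k ∈ range n, (k : ℂ) * t ^ k = -(n : ℂ) := by
  have htn : t ^ n = 1 := (Polynomial.mem_nthRootsFinset hn (1 : ℂ)).1 ht
  have hgeom : ∑ k ∈ range n, t ^ k = 0 := by
    rw [geom_sum_eq ht1, htn, sub_self, zero_div]
  have h1 : (1 - t) * ∑ k ∈ range n, (k : ℂ) * t ^ k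
      = ∑ k ∈ range n, (((k : ℂ) * t ^ k - ((k + 1 : ℕ) : ℂ) * t ^ (k + 1)) + t * t ^ k) := by
    rw [Finset.mul_sum]
    refine Finset.sum_congr rfl fun k _ => ?_
    push_cast
    ring
  rw [h1, Finset.sum_add_distrib, Finset.sum_range_sub' (fun k => (k : ℂ) * t ^ k) n,
    ← Finset.mul_sum, hgeom, mul_zero, add_zero, htn]
  push_cast
  ring

private lemma term_eq (n : ℕ) (hn : 0 < n) {t : ℂ} (ht : t ∈ nthRootsFinset n (1 : ℂ)) (ht1 : t ≠ 1) :
    t / ((1 - t) * (t - 1)) =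
      -(n : ℂ)⁻¹ * (∑ k ∈ range n, (k : ℂ) * t ^ k)
        - ((n : ℂ)⁻¹ * ∑ k ∈ range n, (k : ℂ) * t ^ k) ^ 2 := by
  have hN : (n : ℂ) ≠ 0 := Nat.cast_ne_zero.2 hn.ne'
  have h1 : (1 : ℂ) - t ≠ 0 := sub_ne_zero.2 (Ne.symm ht1)
  have h2 : t - 1 ≠ 0 := sub_ne_zero.2 ht1
  have hD : (∑ k ∈ range n, (k : ℂ) * t ^ k) = -(n : ℂ) / (1 - t) := by
    rw [eq_div_iff h1]
    linear_combination key n hn ht ht1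
  rw [hD]
  field_simp
  ring

private lemma s1 (n : ℕ) : ∑ k ∈ range n, (k : ℂ) = (n : ℂ) * ((n : ℂ) - 1) / 2 := by
  induction n with
  | zero => simp
  | succ m ih => rw [Finset.sum_range_succ, ih]; push_cast; ring

private lemma s2 (n : ℕ) :
    ∑ k ∈ range n, (k : ℂ) ^ 2 = (n : ℂ) * ((n : ℂ) - 1) * (2 * (n : ℂ) - 1) / 6 := by
  induction n with
  | zero => simp
  | succ m ih => rw [Finset.sum_range_succ, ih]; push_cast; ring

theorem sum_pairs_roots_of_unity (n : ℕ) (hn : 0 < n) :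
    ∑ ρ₁ ∈ nthRootsFinset n (1 : ℂ), ∑ ρ₂ ∈ (nthRootsFinset n (1 : ℂ)).erase ρ₁,
        ρ₁ * ρ₂ / ((ρ₁ - ρ₂) * (ρ₂ - ρ₁)) =
      (n : ℂ) * ((n : ℂ) ^ 2 - 1) / 12 := by
  have hN : (n : ℂ) ≠ 0 := Nat.cast_ne_zero.2 hn.ne'
  have h1mem : (1 : ℂ) ∈ nthRootsFinset n (1 : ℂ) := Polynomial.one_mem_nthRootsFinset hn
  -- power sums over the erased set
  have hQ : ∀ m : ℕ, ∑ t ∈ (nthRootsFinset n (1 : ℂ)).erase 1, t ^ m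
      = (if n ∣ m then (n : ℂ) else 0) - 1 := by
    intro m
    rw [Finset.sum_erase_eq_sub h1mem, powsum n hn m, one_pow]
  -- step 1: inner sums are all equal to a fixed sum
  have hstep1 : ∀ ρ₁ ∈ nthRootsFinset n (1 : ℂ),
      ∑ ρ₂ ∈ (nthRootsFinset n (1 : ℂ)).erase ρ₁, ρ₁ * ρ₂ / ((ρ₁ - ρ₂) * (ρ₂ - ρ₁))
        = ∑ t ∈ (nthRootsFinset n (1 : ℂ)).erase 1, t / ((1 - t) * (t - 1)) := by
    intro ρ₁ hρ₁
    have hρ0 : ρ₁ ≠ 0 := Polynomial.ne_zero_of_mem_nthRootsFinset one_ne_zero hρ₁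
    have hρn : ρ₁ ^ n = 1 := (Polynomial.mem_nthRootsFinset hn (1 : ℂ)).1 hρ₁
    refine Finset.sum_nbij' (fun ρ₂ => ρ₂ * ρ₁⁻¹) (fun t => ρ₁ * t) ?_ ?_ ?_ ?_ ?_
    · intro ρ₂ hρ₂
      rw [Finset.mem_erase] at hρ₂ ⊢
      obtain ⟨hne, hmem⟩ := hρ₂
      constructor
      · intro hc
        exact hne (by field_simp at hc; exact hc)
      · rw [Polynomial.mem_nthRootsFinset hn, mul_pow, inv_pow, hρn,
          (Polynomial.mem_nthRootsFinset hn (1 : ℂ)).1 hmem, inv_one, mul_one]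
    · intro t ht
      rw [Finset.mem_erase] at ht ⊢
      obtain ⟨hne, hmem⟩ := ht
      constructor
      · intro hc
        exact hne (mul_left_cancel₀ hρ0 (by rw [hc, mul_one]))
      · simpa using Polynomial.mul_mem_nthRootsFinset hρ₁ hmem
    · intro ρ₂ _; field_simp
    · intro t _; field_simp
    · intro ρ₂ hρ₂
      rw [Finset.mem_erase] at hρ₂
      have hne : ρ₂ - ρ₁ ≠ 0 := sub_ne_zero.2 hρ₂.1
      have hne' : ρ₁ - ρ₂ ≠ 0 := sub_ne_zero.2 (Ne.symm hρ₂.1)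
      have d1 : 1 - ρ₂ * ρ₁⁻¹ ≠ 0 := by
        intro hc
        apply hne'
        have := mul_ne_zero hne' (inv_ne_zero hρ0)
        field_simp at hc
        rw [hc] at hne'
        simp at hne'
      have d2 : ρ₂ * ρ₁⁻¹ - 1 ≠ 0 := by
        intro hc
        apply d1
        linear_combination -hc
      field_simp
  rw [Finset.sum_congr rfl hstep1, Finset.sum_const,
    (Complex.isPrimitiveRoot_exp n hn.ne').card_nthRootsFinset, nsmul_eq_mul]
  -- step 2: compute T
  have hT : ∑ t ∈ (nthRootsFinset n (1 : ℂ)).erase 1, t / ((1 - t) * (t - 1))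
      = -(n : ℂ)⁻¹ * (∑ t ∈ (nthRootsFinset n (1 : ℂ)).erase 1, ∑ k ∈ range n, (k : ℂ) * t ^ k)
        - (n : ℂ)⁻¹ ^ 2 *
          (∑ t ∈ (nthRootsFinset n (1 : ℂ)).erase 1, (∑ k ∈ range n, (k : ℂ) * t ^ k) ^ 2) := by
    rw [Finset.mul_sum, Finset.mul_sum, ← Finset.sum_sub_distrib]
    refine Finset.sum_congr rfl fun t ht => ?_
    rw [Finset.mem_erase] at ht
    rw [term_eq n hn ht.2 ht.1]
    ring
  -- sum of D over erased set
  have hsumD : ∑ t ∈ (nthRootsFinset n (1 : ℂ)).erase 1, ∑ k ∈ range n, (k : ℂ) * t ^ k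
      = -((n : ℂ) * ((n : ℂ) - 1) / 2) := by
    rw [Finset.sum_comm]
    have : ∀ k ∈ range n, ∑ t ∈ (nthRootsFinset n (1 : ℂ)).erase 1, (k : ℂ) * t ^ k
        = -(k : ℂ) := by
      intro k hk
      rw [← Finset.mul_sum, hQ k]
      rcases Nat.eq_zero_or_pos k with rfl | hkpos
      · simp
      · rw [if_neg (Nat.not_dvd_of_pos_of_lt hkpos (mem_range.1 hk))]
        ring
    rw [Finset.sum_congr rfl this, Finset.sum_neg_distrib, s1]
  -- sum of D^2 over the erased set
  have hsumD2 : ∑ t ∈ (nthRootsFinset n (1 : ℂ)).erase 1, (∑ k ∈ range n, (k : ℂ) * t ^ k) ^ 2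
      = (n : ℂ) ^ 2 * ((n : ℂ) - 1) * ((n : ℂ) + 1) / 6
        - (n : ℂ) * ((n : ℂ) - 1) / 2 * ((n : ℂ) * ((n : ℂ) - 1) / 2) := by
    have expand : ∀ t : ℂ, (∑ k ∈ range n, (k : ℂ) * t ^ k) ^ 2
        = ∑ k ∈ range n, ∑ l ∈ range n, (k : ℂ) * (l : ℂ) * t ^ (k + l) := by
      intro t
      rw [sq, Finset.sum_mul_sum]
      exact Finset.sum_congr rfl fun k _ => Finset.sum_congr rfl fun l _ => by
        rw [pow_add]; ring
    simp_rw [expand]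
    rw [Finset.sum_comm]
    have swap : ∀ k ∈ range n,
        ∑ t ∈ (nthRootsFinset n (1 : ℂ)).erase 1, ∑ l ∈ range n, (k : ℂ) * l * t ^ (k + l)
          = ∑ l ∈ range n,
              ((k : ℂ) * l * (if n ∣ (k + l) then (n : ℂ) else 0) - (k : ℂ) * l) := by
      intro k _
      rw [Finset.sum_comm]
      refine Finset.sum_congr rfl fun l _ => ?_
      rw [← Finset.mul_sum, hQ]
      ring
    rw [Finset.sum_congr rfl swap]
    simp_rw [Finset.sum_sub_distrib]
    have inner : ∀ k ∈ range n,
        ∑ l ∈ range n, (k : ℂ) * l * (if n ∣ (k + l) then (n : ℂ) else 0)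
          = (k : ℂ) * ((n : ℂ) - (k : ℂ)) * (n : ℂ) := by
      intro k hk
      have hklt := mem_range.1 hk
      rcases Nat.eq_zero_or_pos k with rfl | hkpos
      · simp
      · rw [Finset.sum_eq_single_of_mem (n - k) (mem_range.2 (Nat.sub_lt hn hkpos))]
        · have hdvd : n ∣ (k + (n - k)) := by
            rw [Nat.add_sub_cancel' hklt.le]
          rw [if_pos hdvd, Nat.cast_sub hklt.le]
        · intro l hl hlne
          have hlt := mem_range.1 hl
          have hnd : ¬ n ∣ (k + l) := by
            rintro ⟨c, hc⟩
            rcases c with _ | _ | c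
            · omega
            · omega
            · have h2n : n * 2 ≤ n * (c + 1 + 1) := Nat.mul_le_mul_left n (by omega)
              omega
          rw [if_neg hnd, mul_zero]
    rw [Finset.sum_congr rfl inner]
    have hA : ∑ k ∈ range n, (k : ℂ) * ((n : ℂ) - (k : ℂ)) * (n : ℂ)
        = (n : ℂ) ^ 2 * ((n : ℂ) - 1) * ((n : ℂ) + 1) / 6 := by
      have hterm : ∀ k ∈ range n, (k : ℂ) * ((n : ℂ) - (k : ℂ)) * (n : ℂ)
          = (n : ℂ) ^ 2 * (k : ℂ) - (n : ℂ) * (k : ℂ) ^ 2 := fun k _ => by ring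
      rw [Finset.sum_congr rfl hterm, Finset.sum_sub_distrib, ← Finset.mul_sum,
        ← Finset.mul_sum, s1, s2]
      ring
    rw [hA, ← Finset.sum_mul_sum, s1]
  rw [hT, hsumD, hsumD2]
  field_simp
  ring
end

section
/- For every positive integer n, the conjectural degree formula specialized to rank r = 2 and genus g = 2 evaluates to (n³−n)/24; that is, (1/n²) · (n²/2) · Σ_{(ρ₁,ρ₂)} ρ₁ρ₂/((ρ₁−ρ₂)(ρ₂−ρ₁)) = (n³−n)/24, where the sum is over all ordered pairs (ρ₁, ρ₂) of n-th roots of unity in ℂ with ρ₁ ≠ ρ₂. -/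
open Polynomial Finset


private lemma sum_k_pow (x : ℂ) (n : ℕ) :
    (x - 1) ^ 2 * ∑ k ∈ range n, (k : ℂ) * x ^ k
      = n * x ^ n * (x - 1) - x * (x ^ n - 1) := by
  induction n with
  | zero => simp
  | succ n ih =>
    rw [Finset.sum_range_succ]
    push_cast
    linear_combination ih

private lemma sum_k2_pow (x : ℂ) (n : ℕ) :
    (x - 1) ^ 3 * ∑ k ∈ range n, (k : ℂ) ^ 2 * x ^ k
      = ((n : ℂ) - 1) ^ 2 * x ^ n * (x - 1) ^ 2 - 2 * n * x ^ n * (x - 1)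
        + 2 * x * (x ^ n - 1) + (x - 1) * (x ^ n - 1) - (x - 1) ^ 2 := by
  induction n with
  | zero => simp
  | succ n ih =>
    rw [Finset.sum_range_succ]
    push_cast
    linear_combination ih

private lemma per_root {n : ℕ} (hn : 0 < n) {ω : ℂ} (hω : ω ∈ nthRootsFinset n (1 : ℂ))
    (h1 : ω ≠ 1) :
    ω / ((1 - ω) * (ω - 1))
      = (∑ k ∈ range n, ((k : ℂ) ^ 2 - n * k) * ω ^ k) / (2 * n) := by
  have hpow : ω ^ n = 1 := (Polynomial.mem_nthRootsFinset hn 1).mp hω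
  have hsub : ω - 1 ≠ 0 := sub_ne_zero.mpr h1
  have hsub' : (1 : ℂ) - ω ≠ 0 := sub_ne_zero.mpr (Ne.symm h1)
  have hnc : (n : ℂ) ≠ 0 := Nat.cast_ne_zero.mpr hn.ne'
  have hA := sum_k_pow ω n
  have hB := sum_k2_pow ω n
  rw [hpow] at hA hB
  have hsplit : ∑ k ∈ range n, ((k : ℂ) ^ 2 - n * k) * ω ^ k
      = (∑ k ∈ range n, (k : ℂ) ^ 2 * ω ^ k)
        - (n : ℂ) * ∑ k ∈ range n, (k : ℂ) * ω ^ k := by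
    rw [Finset.mul_sum, ← Finset.sum_sub_distrib]
    exact Finset.sum_congr rfl fun k _ => by ring
  have key : (ω - 1) * ((ω - 1) ^ 2 * ∑ k ∈ range n, ((k : ℂ) ^ 2 - n * k) * ω ^ k)
      = (ω - 1) * (-2 * n * ω) := by
    rw [hsplit]
    linear_combination hB - (n : ℂ) * (ω - 1) * hA
  have key2 := mul_left_cancel₀ hsub key
  rw [div_eq_div_iff (mul_ne_zero hsub' hsub) (mul_ne_zero two_ne_zero hnc)]
  linear_combination key2


private lemma sum_pow_eq_zero {n k : ℕ} (hk : 0 < k) (hkn : k < n) :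
    ∑ ω ∈ nthRootsFinset n (1 : ℂ), ω ^ k = 0 := by
  have hn : 0 < n := hk.trans hkn
  set ζ : ℂ := Complex.exp (2 * Real.pi * Complex.I / n) with hζdef
  have hζ : IsPrimitiveRoot ζ n := Complex.isPrimitiveRoot_exp n hn.ne'
  have hζmem : ζ ∈ nthRootsFinset n (1 : ℂ) :=
    (Polynomial.mem_nthRootsFinset hn 1).mpr hζ.pow_eq_one
  have hζne : ζ ≠ 0 := Polynomial.ne_zero_of_mem_nthRootsFinset one_ne_zero hζmem
  have hζinv : ζ⁻¹ ∈ nthRootsFinset n (1 : ℂ) := by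
    rw [Polynomial.mem_nthRootsFinset hn 1, inv_pow, hζ.pow_eq_one, inv_one]
  have hbij : ∑ ω ∈ nthRootsFinset n (1 : ℂ), (ζ * ω) ^ k
      = ∑ ω ∈ nthRootsFinset n (1 : ℂ), ω ^ k := by
    refine Finset.sum_bij' (fun ω _ => ζ * ω) (fun ω _ => ζ⁻¹ * ω) ?_ ?_ ?_ ?_ ?_
    · intro a ha; simpa using Polynomial.mul_mem_nthRootsFinset hζmem ha
    · intro a ha; simpa using Polynomial.mul_mem_nthRootsFinset hζinv ha
    · intro a _; field_simp
    · intro a _; field_simp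
    · intro a _; rfl
  have hne : ζ ^ k ≠ 1 := hζ.pow_ne_one_of_pos_of_lt hk.ne' hkn
  have : (ζ ^ k - 1) * ∑ ω ∈ nthRootsFinset n (1 : ℂ), ω ^ k = 0 := by
    have : ζ ^ k * ∑ ω ∈ nthRootsFinset n (1 : ℂ), ω ^ k
        = ∑ ω ∈ nthRootsFinset n (1 : ℂ), ω ^ k := by
      rw [Finset.mul_sum] at *
      rw [← hbij]
      exact Finset.sum_congr rfl fun ω _ => (mul_pow ζ ω k).symm
    linear_combination this
  rcases mul_eq_zero.mp this with h | h
  · exact absurd (sub_eq_zero.mp h) hne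
  · exact h

private lemma sum_range_cast (n : ℕ) :
    ∑ k ∈ range n, (k : ℂ) = n * (n - 1) / 2 := by
  induction n with
  | zero => simp
  | succ n ih => rw [Finset.sum_range_succ]; push_cast; linear_combination ih

private lemma sum_range_sq_cast (n : ℕ) :
    ∑ k ∈ range n, (k : ℂ) ^ 2 = n * (n - 1) * (2 * n - 1) / 6 := by
  induction n with
  | zero => simp
  | succ n ih => rw [Finset.sum_range_succ]; push_cast; linear_combination ih

private lemma T_eval {n : ℕ} (hn : 0 < n) :
    ∑ ω ∈ (nthRootsFinset n (1 : ℂ)).erase 1, ω / ((1 - ω) * (ω - 1))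
      = ((n : ℂ) ^ 2 - 1) / 12 := by
  have h1mem : (1 : ℂ) ∈ nthRootsFinset n (1 : ℂ) := Polynomial.one_mem_nthRootsFinset hn
  have hnc : (n : ℂ) ≠ 0 := Nat.cast_ne_zero.mpr hn.ne'
  have step1 : ∑ ω ∈ (nthRootsFinset n (1 : ℂ)).erase 1, ω / ((1 - ω) * (ω - 1))
      = (∑ ω ∈ (nthRootsFinset n (1 : ℂ)).erase 1,
          ∑ k ∈ range n, ((k : ℂ) ^ 2 - n * k) * ω ^ k) / (2 * n) := by
    rw [Finset.sum_div]
    exact Finset.sum_congr rfl fun ω hω =>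
      per_root hn (Finset.mem_of_mem_erase hω) (Finset.mem_erase.mp hω).1
  have step2 : ∑ ω ∈ (nthRootsFinset n (1 : ℂ)).erase 1,
      ∑ k ∈ range n, ((k : ℂ) ^ 2 - n * k) * ω ^ k
      = ∑ k ∈ range n, -(((k : ℂ) ^ 2 - n * k)) := by
    rw [Finset.sum_comm]
    refine Finset.sum_congr rfl fun k hk => ?_
    rw [← Finset.mul_sum, Finset.sum_erase_eq_sub h1mem, one_pow]
    rcases Nat.eq_zero_or_pos k with h0 | hkpos
    · subst h0; simp
    · rw [sum_pow_eq_zero hkpos (Finset.mem_range.mp hk)]; ring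
  rw [step1, step2]
  have hs1 := sum_range_cast n
  have hs2 := sum_range_sq_cast n
  have hsplit : ∑ k ∈ range n, -(((k : ℂ) ^ 2 - n * k))
      = -(∑ k ∈ range n, (k : ℂ) ^ 2) + n * ∑ k ∈ range n, (k : ℂ) := by
    rw [Finset.mul_sum, ← Finset.sum_neg_distrib, ← Finset.sum_add_distrib]
    exact Finset.sum_congr rfl fun k _ => by ring
  rw [hsplit, hs1, hs2]
  field_simp
  ring

private lemma inner_sum_eq {n : ℕ} (hn : 0 < n) {ρ₁ : ℂ} (hρ₁ : ρ₁ ∈ nthRootsFinset n (1 : ℂ)) :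
    ∑ ρ₂ ∈ (nthRootsFinset n (1 : ℂ)).erase ρ₁, ρ₁ * ρ₂ / ((ρ₁ - ρ₂) * (ρ₂ - ρ₁))
      = ∑ ω ∈ (nthRootsFinset n (1 : ℂ)).erase 1, ω / ((1 - ω) * (ω - 1)) := by
  have hρ₁ne : ρ₁ ≠ 0 := Polynomial.ne_zero_of_mem_nthRootsFinset one_ne_zero hρ₁
  have hinv : ρ₁⁻¹ ∈ nthRootsFinset n (1 : ℂ) := by
    rw [Polynomial.mem_nthRootsFinset hn 1, inv_pow,
      (Polynomial.mem_nthRootsFinset hn 1).mp hρ₁, inv_one]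
  refine Finset.sum_bij' (fun ρ₂ _ => ρ₁⁻¹ * ρ₂) (fun ω _ => ρ₁ * ω) ?_ ?_ ?_ ?_ ?_
  · intro a ha
    rw [Finset.mem_erase] at ha ⊢
    refine ⟨?_, by simpa using Polynomial.mul_mem_nthRootsFinset hinv ha.2⟩
    intro h
    exact ha.1 (by field_simp at h; simpa using h)
  · intro a ha
    rw [Finset.mem_erase] at ha ⊢
    refine ⟨?_, by simpa using Polynomial.mul_mem_nthRootsFinset hρ₁ ha.2⟩
    intro h
    apply ha.1
    have := mul_left_cancel₀ hρ₁ne (h.trans (mul_one ρ₁).symm)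
    exact this
  · intro a _; field_simp
  · intro a _; field_simp
  · intro a ha
    have hane : a ≠ ρ₁ := (Finset.mem_erase.mp ha).1
    have h1 : ρ₁ - a ≠ 0 := sub_ne_zero.mpr (Ne.symm hane)
    have h2 : a - ρ₁ ≠ 0 := sub_ne_zero.mpr hane
    have h3 : (1 : ℂ) - ρ₁⁻¹ * a ≠ 0 := by
      intro h
      apply h1
      have : ρ₁ * (1 - ρ₁⁻¹ * a) = ρ₁ - a := by field_simp
      rw [← this, h, mul_zero]
    have h4 : ρ₁⁻¹ * a - 1 ≠ 0 := by
      intro h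
      apply h3
      rw [← neg_sub] at h
      simpa using neg_eq_zero.mp h
    field_simp
  
theorem degree_formula_rank_two_genus_two (n : ℕ) (hn : 0 < n) :
    (1 / (n : ℂ) ^ 2) * ((n : ℂ) ^ 2 / 2) *
        (∑ ρ₁ ∈ nthRootsFinset n (1 : ℂ), ∑ ρ₂ ∈ (nthRootsFinset n (1 : ℂ)).erase ρ₁,
          ρ₁ * ρ₂ / ((ρ₁ - ρ₂) * (ρ₂ - ρ₁))) =
      ((n : ℂ) ^ 3 - (n : ℂ)) / 24 := by
  have hnc : (n : ℂ) ≠ 0 := Nat.cast_ne_zero.mpr hn.ne'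
  have houter : ∑ ρ₁ ∈ nthRootsFinset n (1 : ℂ), ∑ ρ₂ ∈ (nthRootsFinset n (1 : ℂ)).erase ρ₁,
      ρ₁ * ρ₂ / ((ρ₁ - ρ₂) * (ρ₂ - ρ₁))
      = (n : ℂ) * (((n : ℂ) ^ 2 - 1) / 12) := by
    have : ∀ ρ₁ ∈ nthRootsFinset n (1 : ℂ),
        (∑ ρ₂ ∈ (nthRootsFinset n (1 : ℂ)).erase ρ₁,
          ρ₁ * ρ₂ / ((ρ₁ - ρ₂) * (ρ₂ - ρ₁))) = ((n : ℂ) ^ 2 - 1) / 12 :=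
      fun ρ₁ hρ₁ => (inner_sum_eq hn hρ₁).trans (T_eval hn)
    rw [Finset.sum_congr rfl this, Finset.sum_const,
      (Complex.isPrimitiveRoot_exp n hn.ne').card_nthRootsFinset, nsmul_eq_mul]
  rw [houter]
  field_simp
  ring
end

section
/- For every positive integer n, Holla's formula in rank r = 2 and genus g = 2 evaluates to n³(n²−1)/24; that is, (n²/2) · Σ_{(ρ₁,ρ₂)} ρ₁ρ₂/((ρ₁−ρ₂)(ρ₂−ρ₁)) = n³(n²−1)/24, where the sum is over all ordered pairs (ρ₁, ρ₂) of n-th roots of unity in ℂ with ρ₁ ≠ ρ₂. -/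
open Polynomial Finset

private lemma holla_deriv_prod (t : Finset ℂ) :
    derivative (∏ ζ ∈ t, (X - C ζ)) = ∑ ζ ∈ t, ∏ η ∈ t.erase ζ, (X - C η) := by
  classical
  induction t using Finset.induction_on with
  | empty => simp
  | @insert a t ha ih =>
    rw [Finset.prod_insert ha, derivative_mul, ih, Finset.sum_insert ha,
      Finset.erase_insert ha]
    simp only [derivative_sub, derivative_X, derivative_C, sub_zero, one_mul]
    rw [Finset.mul_sum]
    congr 1
    refine Finset.sum_congr rfl fun ζ hζ => ?_
    rw [Finset.erase_insert_of_ne (by rintro rfl; exact ha hζ),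
      Finset.prod_insert (fun h => ha (Finset.mem_of_mem_erase h))]

private lemma holla_sum_id (n : ℕ) :
    2 * ∑ i ∈ Finset.range n, (i : ℂ) = (n : ℂ) ^ 2 - (n : ℂ) := by
  induction n with
  | zero => simp
  | succ m ih =>
    rw [Finset.sum_range_succ, mul_add, ih]
    push_cast
    ring

private lemma holla_sum_sq (n : ℕ) :
    3 * ∑ i ∈ Finset.range n, (i : ℂ) * (((i - 1 : ℕ)) : ℂ) =
      (n : ℂ) ^ 3 - 3 * (n : ℂ) ^ 2 + 2 * (n : ℂ) := by
  induction n with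
  | zero => simp
  | succ m ih =>
    rw [Finset.sum_range_succ, mul_add, ih]
    rcases m with _ | k
    · norm_num
    · push_cast [Nat.succ_sub_one]
      ring

theorem holla_formula_rank_two_genus_two (n : ℕ) (hn : 0 < n) :
    ((n : ℂ) ^ 2 / 2) *
        (∑ ρ₁ ∈ nthRootsFinset n (1 : ℂ), ∑ ρ₂ ∈ (nthRootsFinset n (1 : ℂ)).erase ρ₁,
          ρ₁ * ρ₂ / ((ρ₁ - ρ₂) * (ρ₂ - ρ₁))) =
      (n : ℂ) ^ 3 * ((n : ℂ) ^ 2 - 1) / 24 := by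
  classical
  have hμ : IsPrimitiveRoot (Complex.exp (2 * Real.pi * Complex.I / n)) n :=
    Complex.isPrimitiveRoot_exp n hn.ne'
  have hn0 : (n : ℂ) ≠ 0 := Nat.cast_ne_zero.mpr hn.ne'
  set N : Finset ℂ := nthRootsFinset n (1 : ℂ) with hN
  set s : Finset ℂ := N.erase 1 with hs
  have h1N : (1 : ℂ) ∈ N := one_mem_nthRootsFinset hn
  have hNcard : N.card = n := hμ.card_nthRootsFinset
  have hζ1 : ∀ ζ ∈ s, ζ ≠ 1 := fun ζ hζ => (Finset.mem_erase.mp hζ).1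
  have h1z : ∀ ζ ∈ s, (1 : ℂ) - ζ ≠ 0 := fun ζ hζ =>
    sub_ne_zero.mpr (Ne.symm (hζ1 ζ hζ))
  -- the polynomial identity  ∏_{ζ ∈ s} (X - ζ) = ∑_{i<n} X^i
  have hQ : (∏ ζ ∈ s, (X - C ζ)) = ∑ i ∈ Finset.range n, (X : ℂ[X]) ^ i := by
    have h2 : (X - C (1 : ℂ)) * ∏ ζ ∈ s, (X - C ζ) = X ^ n - 1 := by
      rw [hs, show ((X : ℂ[X]) - C 1) = (fun ζ : ℂ => (X : ℂ[X]) - C ζ) 1 from rfl,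
        Finset.mul_prod_erase N (fun ζ : ℂ => (X : ℂ[X]) - C ζ) h1N, hN]
      exact (X_pow_sub_one_eq_prod hn hμ).symm
    have h3 : (X - C (1 : ℂ)) * ∑ i ∈ Finset.range n, (X : ℂ[X]) ^ i = X ^ n - 1 := by
      have := geom_sum_mul (X : ℂ[X]) n
      rw [mul_comm] at this
      simpa using this
    have hne : (X - C (1 : ℂ)) ≠ 0 := X_sub_C_ne_zero 1
    exact mul_left_cancel₀ hne (h2.trans h3.symm)
  -- value of the product at 1
  have hP0 : (∏ ζ ∈ s, ((1 : ℂ) - ζ)) = (n : ℂ) := by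
    have := congrArg (eval 1) hQ
    simpa [eval_prod] using this
  have hPer : ∀ ζ ∈ s, (∏ η ∈ s.erase ζ, ((1 : ℂ) - η)) = (n : ℂ) / (1 - ζ) := by
    intro ζ hζ
    rw [eq_div_iff (h1z ζ hζ), mul_comm]
    rw [show ((1:ℂ) - ζ) = (fun η : ℂ => (1:ℂ) - η) ζ from rfl,
      Finset.mul_prod_erase s (fun η : ℂ => (1:ℂ) - η) hζ]
    exact hP0
  have hPer2 : ∀ ζ ∈ s, ∀ η ∈ s.erase ζ,
      (∏ θ ∈ (s.erase ζ).erase η, ((1 : ℂ) - θ)) = (n : ℂ) / ((1 - ζ) * (1 - η)) := by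
    intro ζ hζ η hη
    have hη' : η ∈ s := Finset.mem_of_mem_erase hη
    rw [eq_div_iff (mul_ne_zero (h1z ζ hζ) (h1z η hη'))]
    calc (∏ θ ∈ (s.erase ζ).erase η, ((1:ℂ) - θ)) * ((1 - ζ) * (1 - η))
        = (1 - ζ) * ((1 - η) * ∏ θ ∈ (s.erase ζ).erase η, ((1:ℂ) - θ)) := by ring
      _ = (1 - ζ) * ∏ θ ∈ s.erase ζ, ((1:ℂ) - θ) := by
          rw [show ((1:ℂ) - η) = (fun θ : ℂ => (1:ℂ) - θ) η from rfl,
            Finset.mul_prod_erase (s.erase ζ) (fun θ : ℂ => (1:ℂ) - θ) hη]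
      _ = (n : ℂ) := by rw [hPer ζ hζ, mul_div_cancel₀ _ (h1z ζ hζ)]
  -- first derivative evaluated at 1
  have e1 : (∑ ζ ∈ s, (n : ℂ) / (1 - ζ)) = ∑ i ∈ Finset.range n, (i : ℂ) := by
    have := congrArg (fun p => eval 1 (derivative p)) hQ
    simp only [holla_deriv_prod, derivative_sum, derivative_X_pow, eval_finset_sum,
      eval_prod, eval_sub, eval_X, eval_C, eval_mul, eval_pow, eval_natCast,
      one_pow, mul_one] at this
    rw [← this]
    exact Finset.sum_congr rfl fun ζ hζ => (hPer ζ hζ).symm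
  -- second derivative evaluated at 1
  have e2 : (∑ ζ ∈ s, ∑ η ∈ s.erase ζ, (n : ℂ) / ((1 - ζ) * (1 - η))) =
      ∑ i ∈ Finset.range n, (i : ℂ) * (((i - 1 : ℕ)) : ℂ) := by
    have := congrArg (fun p => eval 1 (derivative (derivative p))) hQ
    simp only [holla_deriv_prod, derivative_sum, derivative_X_pow, derivative_mul,
      derivative_C, zero_mul, zero_add, eval_finset_sum, eval_prod, eval_sub, eval_X,
      eval_C, eval_mul, eval_pow, eval_natCast, one_pow, mul_one] at this
    rw [← this]
    exact Finset.sum_congr rfl fun ζ hζ => Finset.sum_congr rfl fun η hη =>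
      (hPer2 ζ hζ η hη).symm
  set A : ℂ := ∑ ζ ∈ s, (1 - ζ)⁻¹ with hA
  set B : ℂ := ∑ ζ ∈ s, ((1 - ζ)⁻¹) ^ 2 with hB
  -- equation 1 : 2 n A = n² - n
  have eq1 : 2 * ((n : ℂ) * A) = (n : ℂ) ^ 2 - (n : ℂ) := by
    calc 2 * ((n : ℂ) * A)
        = 2 * ∑ ζ ∈ s, (n : ℂ) / (1 - ζ) := by
          rw [hA, Finset.mul_sum]
          simp_rw [div_eq_mul_inv]
      _ = 2 * ∑ i ∈ Finset.range n, (i : ℂ) := by rw [e1]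
      _ = (n : ℂ) ^ 2 - (n : ℂ) := holla_sum_id n
  -- equation 2 : 3 n (A² - B) = n³ - 3n² + 2n
  have eq2 : 3 * ((n : ℂ) * (A * A - B)) = (n : ℂ) ^ 3 - 3 * (n : ℂ) ^ 2 + 2 * (n : ℂ) := by
    have inner : ∀ ζ ∈ s, (∑ η ∈ s.erase ζ, (n : ℂ) / ((1 - ζ) * (1 - η))) =
        (n : ℂ) * ((1 - ζ)⁻¹ * (A - (1 - ζ)⁻¹)) := by
      intro ζ hζ
      have hsub : (∑ η ∈ s.erase ζ, (1 - η)⁻¹) = A - (1 - ζ)⁻¹ := by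
        rw [hA]; exact Finset.sum_erase_eq_sub hζ
      calc (∑ η ∈ s.erase ζ, (n : ℂ) / ((1 - ζ) * (1 - η)))
          = ∑ η ∈ s.erase ζ, (n : ℂ) * ((1 - ζ)⁻¹ * (1 - η)⁻¹) :=
            Finset.sum_congr rfl fun η _ => by rw [div_eq_mul_inv, mul_inv]
        _ = (n : ℂ) * ((1 - ζ)⁻¹ * ∑ η ∈ s.erase ζ, (1 - η)⁻¹) := by
            rw [Finset.mul_sum, Finset.mul_sum]
        _ = (n : ℂ) * ((1 - ζ)⁻¹ * (A - (1 - ζ)⁻¹)) := by rw [hsub]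
    have hsum : (∑ ζ ∈ s, (1 - ζ)⁻¹ * (A - (1 - ζ)⁻¹)) = A * A - B := by
      calc (∑ ζ ∈ s, (1 - ζ)⁻¹ * (A - (1 - ζ)⁻¹))
          = ∑ ζ ∈ s, ((1 - ζ)⁻¹ * A - ((1 - ζ)⁻¹) ^ 2) :=
            Finset.sum_congr rfl fun ζ _ => by ring
        _ = (∑ ζ ∈ s, (1 - ζ)⁻¹ * A) - ∑ ζ ∈ s, ((1 - ζ)⁻¹) ^ 2 :=
            Finset.sum_sub_distrib _ _
        _ = A * A - B := by rw [← Finset.sum_mul, ← hA, ← hB]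
    calc 3 * ((n : ℂ) * (A * A - B))
        = 3 * ∑ ζ ∈ s, (n : ℂ) * ((1 - ζ)⁻¹ * (A - (1 - ζ)⁻¹)) := by
          rw [← Finset.mul_sum, hsum]
      _ = 3 * ∑ ζ ∈ s, ∑ η ∈ s.erase ζ, (n : ℂ) / ((1 - ζ) * (1 - η)) := by
          rw [Finset.sum_congr rfl inner]
      _ = 3 * ∑ i ∈ Finset.range n, (i : ℂ) * (((i - 1 : ℕ)) : ℂ) := by rw [e2]
      _ = (n : ℂ) ^ 3 - 3 * (n : ℂ) ^ 2 + 2 * (n : ℂ) := holla_sum_sq n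
  have hAval : A = ((n : ℂ) - 1) / 2 := by
    apply mul_left_cancel₀ hn0
    linear_combination eq1 / 2
  have hBval : B = (((n : ℂ) - 1) / 2) ^ 2 - ((n : ℂ) ^ 2 - 3 * (n : ℂ) + 2) / 3 := by
    apply mul_left_cancel₀ hn0
    rw [hAval] at eq2
    linear_combination (-1 / 3 : ℂ) * eq2
  -- reindex the double sum
  have hinner : ∀ ρ₁ ∈ N, (∑ ρ₂ ∈ N.erase ρ₁, ρ₁ * ρ₂ / ((ρ₁ - ρ₂) * (ρ₂ - ρ₁))) =
      ∑ ζ ∈ s, ζ / ((1 - ζ) * (ζ - 1)) := by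
    intro ρ₁ hρ₁
    have hρ₁0 : ρ₁ ≠ 0 := ne_zero_of_mem_nthRootsFinset one_ne_zero hρ₁
    refine (Finset.sum_nbij' (fun ρ₂ => ρ₁⁻¹ * ρ₂) (fun ζ => ρ₁ * ζ) ?_ ?_ ?_ ?_ ?_)
    · intro ρ₂ hρ₂
      obtain ⟨hne, hρ₂N⟩ := Finset.mem_erase.mp hρ₂
      refine Finset.mem_erase.mpr ⟨?_, ?_⟩
      · intro h
        exact hne (by field_simp at h; linear_combination h)
      · rw [hN, mem_nthRootsFinset hn 1, mul_pow, inv_pow,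
          (mem_nthRootsFinset hn 1).mp ((hN ▸ hρ₁) : ρ₁ ∈ nthRootsFinset n (1 : ℂ)),
          (mem_nthRootsFinset hn 1).mp ((hN ▸ hρ₂N) : ρ₂ ∈ nthRootsFinset n (1 : ℂ))]
        simp
    · intro ζ hζ
      obtain ⟨hne, hζN⟩ := Finset.mem_erase.mp hζ
      refine Finset.mem_erase.mpr ⟨?_, by simpa using mul_mem_nthRootsFinset (hN ▸ hρ₁) hζN⟩
      intro h
      exact hne (by field_simp at h; rw [h])
    · intro ρ₂ _; field_simp
    · intro ζ _; field_simp
    · intro ρ₂ hρ₂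
      obtain ⟨hne, _⟩ := Finset.mem_erase.mp hρ₂
      have h1 : ρ₁ - ρ₂ ≠ 0 := sub_ne_zero.mpr (Ne.symm hne)
      have h2 : ρ₂ - ρ₁ ≠ 0 := sub_ne_zero.mpr hne
      field_simp
  rw [Finset.sum_congr rfl hinner, Finset.sum_const, hNcard, nsmul_eq_mul]
  have hT : (∑ ζ ∈ s, ζ / ((1 - ζ) * (ζ - 1))) = A - B := by
    rw [hA, hB, ← Finset.sum_sub_distrib]
    refine Finset.sum_congr rfl fun ζ hζ => ?_
    have h := h1z ζ hζ
    have h' : ζ - 1 ≠ 0 := sub_ne_zero.mpr (hζ1 ζ hζ)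
    field_simp
    ring
  rw [hT, hAval, hBval]
  ring
end

section
/- Let n ≥ 2 and g ≥ 2 be integers. Then (n^{g−2}/2) · Σ_{(ρ₁,ρ₂)} (ρ₁ρ₂)^{g−1}/((ρ₁−ρ₂)(ρ₂−ρ₁))^{g−1} = 2^{−g} · (n/2)^{g−1} · Σ_{j=1}^{n−1} (sin(jπ/n))^{−(2g−2)}, where the left-hand sum is over all ordered pairs (ρ₁, ρ₂) of n-th roots of unity in ℂ with ρ₁ ≠ ρ₂, and in particular the left-hand side is a positive real number. -/
open Polynomial Finset Real

theorem dormant_degree_eq_verlinde (n g : ℕ) (hn : 2 ≤ n) (hg : 2 ≤ g) :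
    ((n : ℂ) ^ (g - 2) / 2) *
          (∑ ρ₁ ∈ nthRootsFinset n (1 : ℂ), ∑ ρ₂ ∈ (nthRootsFinset n (1 : ℂ)).erase ρ₁,
            (ρ₁ * ρ₂) ^ (g - 1) / ((ρ₁ - ρ₂) * (ρ₂ - ρ₁)) ^ (g - 1)) =
        (((1 / 2 ^ g) * ((n : ℝ) / 2) ^ (g - 1) *
          ∑ j ∈ Finset.Icc 1 (n - 1), 1 / Real.sin (j * Real.pi / n) ^ (2 * g - 2) : ℝ) : ℂ) ∧
      0 < ((1 / 2 ^ g) * ((n : ℝ) / 2) ^ (g - 1) *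
          ∑ j ∈ Finset.Icc 1 (n - 1), 1 / Real.sin (j * Real.pi / n) ^ (2 * g - 2) : ℝ) := by
  obtain ⟨m, rfl⟩ : ∃ m, g = m + 2 := ⟨g - 2, by omega⟩
  have hnpos : 0 < n := by omega
  have : NeZero n := ⟨by omega⟩
  have hn0 : (n : ℝ) ≠ 0 := by positivity
  simp only [show m + 2 - 1 = m + 1 from rfl, show m + 2 - 2 = m from rfl,
    show 2 * (m + 2) - 2 = 2 * m + 2 from by omega]
  -- positivity of each sine
  have hsin : ∀ j ∈ Finset.Icc 1 (n - 1), 0 < Real.sin (j * Real.pi / n) := by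
    intro j hj
    rw [Finset.mem_Icc] at hj
    apply Real.sin_pos_of_pos_of_lt_pi
    · have h1 : (1 : ℝ) ≤ (j : ℝ) := by exact_mod_cast hj.1
      have : 0 < (n : ℝ) := by positivity
      positivity
    · have hjn : (j : ℝ) < n := by exact_mod_cast (by omega : j < n)
      rw [div_lt_iff₀ (by positivity)]
      nlinarith [Real.pi_pos]
  -- the primitive root
  set ζ : ℂ := Complex.exp (2 * Real.pi * Complex.I / n) with hζdef
  have hζ : IsPrimitiveRoot ζ n := Complex.isPrimitiveRoot_exp n (by omega)
  have hζ0 : ζ ≠ 0 := Complex.exp_ne_zero _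
  -- the value of each term
  have hterm : ∀ ρ₁ : ℂ, ρ₁ ≠ 0 → ∀ j ∈ Finset.Icc 1 (n - 1),
      (ρ₁ * (ρ₁ * ζ ^ j)) ^ (m + 1) / ((ρ₁ - ρ₁ * ζ ^ j) * (ρ₁ * ζ ^ j - ρ₁)) ^ (m + 1)
        = ((((4 * Real.sin (j * Real.pi / n) ^ 2)⁻¹) ^ (m + 1) : ℝ) : ℂ) := by
    intro ρ₁ hρ₁ j hj
    have hw : ζ ^ j = Complex.exp (((2 * Real.pi * j / n : ℝ) : ℂ) * Complex.I) := by
      rw [← Complex.exp_nat_mul]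
      congr 1
      push_cast
      ring
    set θ : ℂ := ((2 * Real.pi * j / n : ℝ) : ℂ) with hθ
    have h1 : (ζ ^ j) ^ 2 + 1 = 2 * (ζ ^ j) * Complex.cos θ := by
      rw [hw, Complex.exp_mul_I]
      linear_combination (-1 : ℂ) * Complex.sin_sq_add_cos_sq θ +
        Complex.sin θ ^ 2 * Complex.I_sq
    set c : ℂ := (((4 * Real.sin (j * Real.pi / n) ^ 2 : ℝ)) : ℂ) with hcdef
    have hcR : (4 * Real.sin (j * Real.pi / n) ^ 2 : ℝ)
        = 2 - 2 * Real.cos (2 * Real.pi * j / n) := by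
      have h2 : (2 * Real.pi * j / n : ℝ) = 2 * (j * Real.pi / n) := by ring
      rw [h2, Real.cos_two_mul, Real.sin_sq]
      ring
    have hc : c = 2 - 2 * Complex.cos θ := by
      rw [hcdef, hcR, hθ]
      push_cast [Complex.ofReal_cos]
      ring
    have hc0 : c ≠ 0 := by
      rw [hcdef]
      have := hsin j hj
      exact_mod_cast Complex.ofReal_ne_zero.mpr (by positivity)
    have hζj0 : ζ ^ j ≠ 0 := pow_ne_zero _ hζ0
    have hden : (ρ₁ - ρ₁ * ζ ^ j) * (ρ₁ * ζ ^ j - ρ₁) = (ρ₁ ^ 2 * ζ ^ j) * c := by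
      rw [hc]
      linear_combination (-ρ₁ ^ 2) * h1
    have hnum : ρ₁ * (ρ₁ * ζ ^ j) = ρ₁ ^ 2 * ζ ^ j := by ring
    have ha : (ρ₁ ^ 2 * ζ ^ j) ^ (m + 1) ≠ 0 := pow_ne_zero _ (by
      exact mul_ne_zero (pow_ne_zero _ hρ₁) hζj0)
    rw [hnum, hden, mul_pow (ρ₁ ^ 2 * ζ ^ j) c (m + 1),
      div_mul_eq_div_div, div_self ha, one_div, ← inv_pow, hcdef,
      Complex.ofReal_pow, Complex.ofReal_inv]
  -- the inner sum
  have inner : ∀ ρ₁ ∈ nthRootsFinset n (1 : ℂ),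
      ∑ ρ₂ ∈ (nthRootsFinset n (1 : ℂ)).erase ρ₁,
          (ρ₁ * ρ₂) ^ (m + 1) / ((ρ₁ - ρ₂) * (ρ₂ - ρ₁)) ^ (m + 1)
        = ∑ j ∈ Finset.Icc 1 (n - 1),
            ((((4 * Real.sin (j * Real.pi / n) ^ 2)⁻¹) ^ (m + 1) : ℝ) : ℂ) := by
    intro ρ₁ hρ₁
    have hρ₁0 : ρ₁ ≠ 0 := ne_zero_of_mem_nthRootsFinset one_ne_zero hρ₁
    refine (Finset.sum_bij (fun j _ ↦ ρ₁ * ζ ^ j) ?_ ?_ ?_ ?_).symm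
    · intro j hj
      rw [Finset.mem_Icc] at hj
      rw [Finset.mem_erase]
      obtain ⟨hj1, hj2⟩ := hj
      constructor
      · intro h
        have hζj : ζ ^ j = 1 := by
          field_simp at h
          tauto
        rw [hζ.pow_eq_one_iff_dvd] at hζj
        have := Nat.le_of_dvd (by omega) hζj
        omega
      · have hζj : ζ ^ j ∈ nthRootsFinset n (1 : ℂ) := by
          rw [mem_nthRootsFinset hnpos, ← pow_mul, mul_comm, pow_mul, hζ.pow_eq_one, one_pow]
        have := mul_mem_nthRootsFinset hρ₁ hζj
        rwa [mul_one] at this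
    · intro a ha b hb hab
      rw [Finset.mem_Icc] at ha hb
      have := mul_left_cancel₀ hρ₁0 hab
      exact hζ.injOn_pow (Finset.mem_coe.mpr (Finset.mem_range.mpr (by omega)))
        (Finset.mem_coe.mpr (Finset.mem_range.mpr (by omega))) this
    · intro ρ₂ hρ₂
      rw [Finset.mem_erase] at hρ₂
      have hρ₂n : ρ₂ ∈ nthRootsFinset n (1 : ℂ) := hρ₂.2
      have hρ₂0 : ρ₂ ≠ 0 := ne_zero_of_mem_nthRootsFinset one_ne_zero hρ₂n
      have hpow : (ρ₂ * ρ₁⁻¹) ^ n = 1 := by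
        rw [mul_pow, (mem_nthRootsFinset hnpos (1 : ℂ)).mp hρ₂n, inv_pow,
          (mem_nthRootsFinset hnpos (1 : ℂ)).mp hρ₁, inv_one, one_mul]
      obtain ⟨i, hi, hii⟩ := hζ.eq_pow_of_pow_eq_one hpow
      have hi0 : i ≠ 0 := by
        rintro rfl
        simp only [pow_zero] at hii
        apply hρ₂.1
        field_simp at hii
        first
        | exact hii
        | exact hii.symm
      refine ⟨i, Finset.mem_Icc.mpr ⟨by omega, by omega⟩, ?_⟩
      show ρ₁ * ζ ^ i = ρ₂
      rw [hii]
      field_simp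
    · intro j hj
      exact (hterm ρ₁ hρ₁0 j hj).symm
  rw [Finset.sum_congr rfl inner, Finset.sum_const, hζ.card_nthRootsFinset, nsmul_eq_mul]
  have hsum : ∀ j ∈ Finset.Icc 1 (n - 1), (0:ℝ) < 1 / Real.sin (j * Real.pi / n) ^ (2 * m + 2) := by
    intro j hj
    have := hsin j hj
    positivity
  constructor
  · rw [← Complex.ofReal_sum]
    rw [show ((n:ℂ) ^ m / 2) = (((n:ℝ) ^ m / 2 : ℝ) : ℂ) by push_cast; ring,
      show ((n:ℕ) : ℂ) = (((n:ℝ) : ℝ) : ℂ) by push_cast; ring,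
      ← Complex.ofReal_mul, ← Complex.ofReal_mul]
    rw [Complex.ofReal_inj]
    rw [Finset.mul_sum, Finset.mul_sum, Finset.mul_sum]
    refine Finset.sum_congr rfl fun j hj ↦ ?_
    have hs := hsin j hj
    set s := Real.sin (j * Real.pi / n) with hs'
    have h4 : ((4:ℝ) * s ^ 2) ^ (m + 1) = 2 ^ (2 * m + 2) * s ^ (2 * m + 2) := by
      rw [mul_pow, ← pow_mul, show (4:ℝ) = 2 ^ 2 by norm_num, ← pow_mul,
        show 2 * (m + 1) = 2 * m + 2 by ring]
    rw [inv_pow, h4, div_pow]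
    field_simp
    ring
  · apply mul_pos (mul_pos (by positivity) (by positivity))
    refine Finset.sum_pos hsum ⟨1, Finset.mem_Icc.mpr ⟨le_refl 1, by omega⟩⟩
end
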